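/- Let m ≥ 1 be an integer and let (b⋆,d⋆) ∈ S*_m. Then the denominator −(2+m)/m + (m/(2+m)) d⋆ + (2(2+m)/m) b⋆ + (4(1+m)/(m(2+m)))(2 b⋆^{1+m/2} − 1) d⋆^{−m/2} − 2 t₀*(b⋆,m) appearing in W_*(b⋆,d⋆,m) is positive and equals ∫₀^∞ |g_{b⋆,d⋆,m}(t)| dt, and the Lebesgue measure of {t ∈ [0,∞) : |Λ_m^* g_{b⋆,d⋆,m}(t)| ≥ 1} is at least 1 − d⋆; consequently |{t ∈ [0,∞) : |Λ_m^* g_{b⋆,d⋆,m}(t)| ≥ 1}| ≥ W_*(b⋆,d⋆,m) · ∫₀^∞ |g_{b⋆,d⋆,m}(t)| dt. -/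

import Mathlib

open MeasureTheory Real Set

/-- The adjoint operator `Λ_m^*`. -/
noncomputable def LamStar (m : ℕ) (f : ℝ → ℝ) (t : ℝ) : ℝ :=
  (1 + (m : ℝ)) * t ^ ((m : ℝ) / 2) * (∫ s in Set.Ioi t, f s * s ^ (-1 - (m : ℝ) / 2)) - f t

/-- The coefficient `D_*(b⋆,m) = (2(1+m)/(2+m))(2 b⋆^{1+m/2} - 1)`. -/
noncomputable def DcoefStar (m : ℕ) (b : ℝ) : ℝ :=
  (2 * (1 + (m : ℝ)) / (2 + (m : ℝ))) * (2 * b ^ (1 + (m : ℝ) / 2) - 1)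

/-- The parameter set `S*_m` (first coordinate `b⋆`, second coordinate `d⋆`). -/
def SsetStar (m : ℕ) : Set (ℝ × ℝ) :=
  {p : ℝ × ℝ | 0 < p.2 ∧ p.2 < p.1 ∧ p.1 < 1 ∧ 0 < DcoefStar m p.1 ∧
    -(m : ℝ) / (2 + (m : ℝ)) + DcoefStar m p.1 * p.2 ^ (-1 - (m : ℝ) / 2) < 2 ∧
    0 < -(m : ℝ) / (2 + (m : ℝ)) + DcoefStar m p.1 * p.2 ^ (-1 - (m : ℝ) / 2) ∧
    -(m : ℝ) / (2 + (m : ℝ)) + DcoefStar m p.1 * p.1 ^ (-1 - (m : ℝ) / 2) < 0}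

/-- The function `g_{b⋆,d⋆,m}` from the class `F^sp*_m`. -/
noncomputable def gsp (m : ℕ) (b d t : ℝ) : ℝ :=
  if d < t ∧ t ≤ b then -(m : ℝ) / (2 + (m : ℝ)) + DcoefStar m b * t ^ (-1 - (m : ℝ) / 2)
  else if b < t ∧ t ≤ 1 then
    (m : ℝ) / (2 + (m : ℝ)) - (2 * (1 + (m : ℝ)) / (2 + (m : ℝ))) * t ^ (-1 - (m : ℝ) / 2)
  else 0

/-- `t₀*(b⋆,m)`. -/
noncomputable def t0Star (m : ℕ) (b : ℝ) : ℝ :=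
  (2 * (1 + (m : ℝ)) / (m : ℝ)) ^ (2 / (2 + (m : ℝ))) *
    (2 * b ^ (1 + (m : ℝ) / 2) - 1) ^ (2 / (2 + (m : ℝ)))

/-- The denominator of `W_*(b⋆,d⋆,m)`. -/
noncomputable def denomStar (m : ℕ) (b d : ℝ) : ℝ :=
  -(2 + (m : ℝ)) / (m : ℝ) + ((m : ℝ) / (2 + (m : ℝ))) * d + (2 * (2 + (m : ℝ)) / (m : ℝ)) * b
    + (4 * (1 + (m : ℝ)) / ((m : ℝ) * (2 + (m : ℝ)))) * (2 * b ^ (1 + (m : ℝ) / 2) - 1)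
      * d ^ (-(m : ℝ) / 2)
    - 2 * t0Star m b

/-- `W_*(b⋆,d⋆,m)`. -/
noncomputable def WfStar (m : ℕ) (b d : ℝ) : ℝ := (1 - d) / denomStar m b d

/-- The weak-type ratio of `g_{b⋆,d⋆,m}` under `Λ_m^*`. -/
noncomputable def ratioStar (m : ℕ) (b d : ℝ) : ℝ :=
  (MeasureTheory.volume {t : ℝ | 0 ≤ t ∧ 1 ≤ |LamStar m (gsp m b d) t|}).toReal /
    ∫ t in Set.Ici (0 : ℝ), |gsp m b d t|

/-- The restricted weak-type constant of `Λ_m^*` over the class `F^sp*_m`. -/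
noncomputable def RspStar (m : ℕ) : ℝ :=
  sSup {r : ℝ | ∃ b d : ℝ, (b, d) ∈ SsetStar m ∧ r = ratioStar m b d}

/-!
On `(d⋆, b⋆]` and on `(b⋆, 1]` the function `g = g_{b⋆,d⋆,m}` has the form `A + B t ^ r` with
`r = -1 - m/2`, so `g(s) s ^ r` has the explicit primitive `rpowWeightedPrimitive r A B`. The
coefficients of `g` are tuned so that the two primitives agree at `b⋆` and the right one vanishes
at `1`; hence `∫ₜ^∞ g(s) s ^ r ds = -rpowWeightedPrimitive r A B t`, and in `Λ_m^* g (t)` the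
factor `(1+m) t ^ (m/2)` turns this into a constant minus `B t ^ r`, which cancels against `g(t)`
and leaves `Λ_m^* g = (2+m)/m · A = ∓1` on `(d⋆, 1]`.

The `L¹`-norm is computed branch by branch: `g` changes sign only at `t₀*`, where its left branch
vanishes, and `g ≤ -1` on `(b⋆, 1]`, which makes the norm positive.
-/

section RpowPrimitives

variable {f : ℝ → ℝ} {r A B x y : ℝ}

noncomputable def rpowPrimitive (r A B t : ℝ) : ℝ := A * t + B * (t ^ (r + 1) / (r + 1))

noncomputable def rpowWeightedPrimitive (r A B t : ℝ) : ℝ :=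
  A * (t ^ (r + 1) / (r + 1)) + B * (t ^ (2 * r + 1) / (2 * r + 1))

theorem zero_notMem_uIcc_of_pos (hx : 0 < x) (hxy : x ≤ y) : (0 : ℝ) ∉ uIcc x y := by
  rw [uIcc_of_le hxy]; exact fun h => hx.not_ge h.1

theorem continuousOn_const_add_mul_rpow (hx : 0 < x) :
    ContinuousOn (fun t => A + B * t ^ r) (Icc x y) :=
  continuousOn_const.add <| continuousOn_const.mul <|
    continuousOn_id.rpow_const fun _ ht => Or.inl (hx.trans_le ht.1).ne'

theorem intervalIntegrable_of_eqOn_const_add_mul_rpow (hx : 0 < x) (hxy : x ≤ y)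
    (hf : EqOn f (fun t => A + B * t ^ r) (Ioo x y)) : IntervalIntegrable f volume x y :=
  ((continuousOn_const_add_mul_rpow hx).intervalIntegrable_of_Icc hxy).congr_uIoo <| by
    rw [uIoo_of_le hxy]; exact hf.symm

theorem integral_rpow_of_pos (hx : 0 < x) (hxy : x ≤ y) (hr : r ≠ -1) :
    ∫ t in x..y, t ^ r = (y ^ (r + 1) - x ^ (r + 1)) / (r + 1) :=
  integral_rpow <| Or.inr ⟨hr, zero_notMem_uIcc_of_pos hx hxy⟩

theorem intervalIntegrable_mul_rpow_of_eqOn_const_add_mul_rpow (hx : 0 < x) (hxy : x ≤ y)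
    (hf : EqOn f (fun t => A + B * t ^ r) (Ioo x y)) :
    IntervalIntegrable (fun t => f t * t ^ r) volume x y :=
  (intervalIntegrable_of_eqOn_const_add_mul_rpow hx hxy hf).mul_continuousOn <|
    continuousOn_id.rpow_const fun _ ht =>
      Or.inl fun h => zero_notMem_uIcc_of_pos hx hxy (h ▸ ht)

theorem integral_eq_rpowPrimitive_sub (hx : 0 < x) (hxy : x ≤ y) (hr : r ≠ -1)
    (hf : EqOn f (fun t => A + B * t ^ r) (Ioo x y)) :
    ∫ t in x..y, f t = rpowPrimitive r A B y - rpowPrimitive r A B x := by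
  have hint : IntervalIntegrable (fun t => t ^ r) volume x y :=
    intervalIntegral.intervalIntegrable_rpow (Or.inr (zero_notMem_uIcc_of_pos hx hxy))
  rw [intervalIntegral.integral_congr_Ioo_of_le hxy hf,
    intervalIntegral.integral_add intervalIntegrable_const (hint.const_mul B),
    intervalIntegral.integral_const_mul, integral_rpow_of_pos hx hxy hr,
    intervalIntegral.integral_const, smul_eq_mul, rpowPrimitive, rpowPrimitive]
  ring

theorem integral_mul_rpow_eq_rpowWeightedPrimitive_sub (hx : 0 < x) (hxy : x ≤ y)
    (hr : r ≠ -1) (hr' : 2 * r ≠ -1)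
    (hf : EqOn f (fun t => A + B * t ^ r) (Ioo x y)) :
    ∫ t in x..y, f t * t ^ r = rpowWeightedPrimitive r A B y - rpowWeightedPrimitive r A B x := by
  have hpow (q : ℝ) : IntervalIntegrable (fun t => t ^ q) volume x y :=
    intervalIntegral.intervalIntegrable_rpow (Or.inr (zero_notMem_uIcc_of_pos hx hxy))
  have hexpand : EqOn (fun t => f t * t ^ r) (fun t => A * t ^ r + B * t ^ (2 * r)) (Ioo x y) := by
    intro t ht
    simp only [hf ht, two_mul, rpow_add (hx.trans ht.1)]
    ring
  rw [intervalIntegral.integral_congr_Ioo_of_le hxy hexpand,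
    intervalIntegral.integral_add ((hpow r).const_mul A) ((hpow _).const_mul B),
    intervalIntegral.integral_const_mul, intervalIntegral.integral_const_mul,
    integral_rpow_of_pos hx hxy hr, integral_rpow_of_pos hx hxy hr', rpowWeightedPrimitive,
    rpowWeightedPrimitive]
  ring

end RpowPrimitives

theorem setIntegral_Ioi_eq_intervalIntegral_of_eq_zero {f : ℝ → ℝ} {a c : ℝ} (hac : a ≤ c)
    (hf : ∀ x, c < x → f x = 0) : ∫ x in Ioi a, f x = ∫ x in a..c, f x := by
  rw [intervalIntegral.integral_of_le hac]
  refine setIntegral_eq_of_subset_of_forall_sdiff_eq_zero measurableSet_Ioi Ioc_subset_Ioi_self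
    fun x hx => hf x ?_
  by_contra! hxc
  exact hx.2 ⟨hx.1, hxc⟩

theorem lamStar_eq_of_integral_Ioi {m : ℕ} (hm : 0 < m) {f : ℝ → ℝ} {t A B : ℝ} (ht : 0 < t)
    (hft : f t = A + B * t ^ (-1 - m / 2 : ℝ))
    (htail : ∫ s in Ioi t, f s * s ^ (-1 - m / 2 : ℝ) =
      -rpowWeightedPrimitive (-1 - m / 2) A B t) :
    LamStar m f t = (2 + m) / m * A := by
  have hm' : (0 : ℝ) < m := Nat.cast_pos.mpr hm
  have h₁ : t ^ ((-1 - m / 2 : ℝ) + 1) = (t ^ (m / 2 : ℝ))⁻¹ := by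
    rw [← rpow_neg ht.le]; ring_nf
  have h₂ : t ^ (2 * (-1 - m / 2 : ℝ) + 1) = t ^ (-1 - m / 2 : ℝ) * (t ^ (m / 2 : ℝ))⁻¹ := by
    rw [← rpow_neg ht.le, ← rpow_add ht]; ring_nf
  have hpos : 0 < t ^ (m / 2 : ℝ) := rpow_pos_of_pos ht _
  rw [LamStar, htail, hft, rpowWeightedPrimitive, h₁, h₂,
    show (-1 - m / 2 : ℝ) + 1 = -(m / 2) by ring, show 2 * (-1 - m / 2 : ℝ) + 1 = -(1 + m) by ring]
  field_simp
  ring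

section LamStarGsp

variable {m : ℕ} {b d t : ℝ}

theorem gsp_of_mem_Ioc_left (ht : t ∈ Ioc d b) :
    gsp m b d t = -(m / (2 + m) : ℝ) + DcoefStar m b * t ^ (-1 - m / 2 : ℝ) := by
  rw [gsp, if_pos (mem_Ioc.mp ht), neg_div]

theorem gsp_of_mem_Ioc_right (ht : t ∈ Ioc b 1) :
    gsp m b d t = (m / (2 + m) : ℝ) + -(2 * (1 + m) / (2 + m) : ℝ) * t ^ (-1 - m / 2 : ℝ) := by
  rw [gsp, if_neg fun h => h.2.not_gt ht.1, if_pos (mem_Ioc.mp ht)]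
  ring

theorem gsp_eq_zero_of_notMem (hdb : d ≤ b) (hb1 : b ≤ 1) (ht : t ∉ Ioc d 1) : gsp m b d t = 0 := by
  rw [gsp, if_neg, if_neg] <;> exact fun h => ht ⟨by linarith [h.1], by linarith [h.2]⟩

theorem rpowWeightedPrimitive_gsp_right_one (hm : 0 < m) :
    rpowWeightedPrimitive (-1 - m / 2) (m / (2 + m)) (-(2 * (1 + m) / (2 + m))) 1 = 0 := by
  have hm' : (0 : ℝ) < m := Nat.cast_pos.mpr hm
  rw [rpowWeightedPrimitive, one_rpow, one_rpow,
    show (-1 - m / 2 : ℝ) + 1 = -(m / 2) by ring, show 2 * (-1 - m / 2 : ℝ) + 1 = -(1 + m) by ring]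
  field_simp
  ring

theorem rpowWeightedPrimitive_gsp_left_eq_right (hm : 0 < m) (hb : 0 < b) :
    rpowWeightedPrimitive (-1 - m / 2) (-(m / (2 + m))) (DcoefStar m b) b =
      rpowWeightedPrimitive (-1 - m / 2) (m / (2 + m)) (-(2 * (1 + m) / (2 + m))) b := by
  have hm' : (0 : ℝ) < m := Nat.cast_pos.mpr hm
  have hpow : b ^ (1 + m / 2 : ℝ) * b ^ (-(1 + m) : ℝ) = b ^ (-(m / 2) : ℝ) := by
    rw [← rpow_add hb]; ring_nf
  rw [rpowWeightedPrimitive, rpowWeightedPrimitive, DcoefStar,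
    show (-1 - m / 2 : ℝ) + 1 = -(m / 2) by ring, show 2 * (-1 - m / 2 : ℝ) + 1 = -(1 + m) by ring]
  generalize b ^ (1 + m / 2 : ℝ) = P at *
  generalize b ^ (-(1 + m) : ℝ) = v at *
  rw [← hpow]
  field_simp
  ring

theorem neg_one_sub_half_ne_neg_one (hm : 0 < m) : (-1 - m / 2 : ℝ) ≠ -1 := by
  have hm' : (0 : ℝ) < m := Nat.cast_pos.mpr hm
  intro h; linarith

theorem two_mul_neg_one_sub_half_ne_neg_one : 2 * (-1 - m / 2 : ℝ) ≠ -1 := by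
  have hm' : (0 : ℝ) ≤ m := Nat.cast_nonneg m
  intro h; linarith

theorem integral_Ioi_gsp_mul_rpow (hdb : d ≤ b) (hb1 : b ≤ 1) (ht : t ≤ 1) :
    ∫ s in Ioi t, gsp m b d s * s ^ (-1 - m / 2 : ℝ) =
      ∫ s in t..1, gsp m b d s * s ^ (-1 - m / 2 : ℝ) :=
  setIntegral_Ioi_eq_intervalIntegral_of_eq_zero ht fun _ hs => by
    rw [gsp_eq_zero_of_notMem hdb hb1 fun h => hs.not_ge h.2, zero_mul]

theorem integral_Ioi_gsp_mul_rpow_of_mem_Ioc_right (hm : 0 < m) (hb : 0 < b) (hdb : d ≤ b)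
    (ht : t ∈ Ioc b 1) :
    ∫ s in Ioi t, gsp m b d s * s ^ (-1 - m / 2 : ℝ) =
      -rpowWeightedPrimitive (-1 - m / 2) (m / (2 + m)) (-(2 * (1 + m) / (2 + m))) t := by
  rw [integral_Ioi_gsp_mul_rpow hdb (ht.1.le.trans ht.2) ht.2,
    integral_mul_rpow_eq_rpowWeightedPrimitive_sub (hb.trans ht.1) ht.2
      (neg_one_sub_half_ne_neg_one hm) two_mul_neg_one_sub_half_ne_neg_one
      fun s hs => gsp_of_mem_Ioc_right ⟨ht.1.trans hs.1, hs.2.le⟩,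
    rpowWeightedPrimitive_gsp_right_one hm, zero_sub]

theorem integral_Ioi_gsp_mul_rpow_of_mem_Ioc_left (hm : 0 < m) (hd : 0 < d) (hb1 : b ≤ 1)
    (ht : t ∈ Ioc d b) :
    ∫ s in Ioi t, gsp m b d s * s ^ (-1 - m / 2 : ℝ) =
      -rpowWeightedPrimitive (-1 - m / 2) (-(m / (2 + m))) (DcoefStar m b) t := by
  have ht0 : 0 < t := hd.trans ht.1
  have hb : 0 < b := ht0.trans_le ht.2
  have hleft : EqOn (gsp m b d) (fun s => -(m / (2 + m) : ℝ) + DcoefStar m b * s ^ (-1 - m / 2 : ℝ))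
      (Ioo t b) := fun s hs => gsp_of_mem_Ioc_left ⟨ht.1.trans hs.1, hs.2.le⟩
  have hright : EqOn (gsp m b d)
      (fun s => (m / (2 + m) : ℝ) + -(2 * (1 + m) / (2 + m) : ℝ) * s ^ (-1 - m / 2 : ℝ))
      (Ioo b 1) := fun s hs => gsp_of_mem_Ioc_right ⟨hs.1, hs.2.le⟩
  have hr := neg_one_sub_half_ne_neg_one hm
  have hr' := two_mul_neg_one_sub_half_ne_neg_one (m := m)
  rw [integral_Ioi_gsp_mul_rpow (ht.1.le.trans ht.2) hb1 (ht.2.trans hb1),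
    ← intervalIntegral.integral_add_adjacent_intervals
      (intervalIntegrable_mul_rpow_of_eqOn_const_add_mul_rpow ht0 ht.2 hleft)
      (intervalIntegrable_mul_rpow_of_eqOn_const_add_mul_rpow hb hb1 hright),
    integral_mul_rpow_eq_rpowWeightedPrimitive_sub ht0 ht.2 hr hr' hleft,
    integral_mul_rpow_eq_rpowWeightedPrimitive_sub hb hb1 hr hr' hright,
    rpowWeightedPrimitive_gsp_right_one hm, rpowWeightedPrimitive_gsp_left_eq_right hm hb]
  ring

theorem lamStar_gsp_of_mem_Ioc_right (hm : 0 < m) (hb : 0 < b) (hdb : d ≤ b) (ht : t ∈ Ioc b 1) :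
    LamStar m (gsp m b d) t = 1 := by
  have hm' : (0 : ℝ) < m := Nat.cast_pos.mpr hm
  rw [lamStar_eq_of_integral_Ioi hm (hb.trans ht.1) (gsp_of_mem_Ioc_right ht)
    (integral_Ioi_gsp_mul_rpow_of_mem_Ioc_right hm hb hdb ht)]
  field_simp

theorem lamStar_gsp_of_mem_Ioc_left (hm : 0 < m) (hd : 0 < d) (hb1 : b ≤ 1) (ht : t ∈ Ioc d b) :
    LamStar m (gsp m b d) t = -1 := by
  have hm' : (0 : ℝ) < m := Nat.cast_pos.mpr hm
  rw [lamStar_eq_of_integral_Ioi hm (hd.trans ht.1) (gsp_of_mem_Ioc_left ht)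
    (integral_Ioi_gsp_mul_rpow_of_mem_Ioc_left hm hd hb1 ht)]
  field_simp

theorem Ioc_subset_superlevel_abs_lamStar_gsp (hm : 0 < m) (hd : 0 < d) (hdb : d ≤ b)
    (hb1 : b ≤ 1) : Ioc d 1 ⊆ {t : ℝ | 0 ≤ t ∧ 1 ≤ |LamStar m (gsp m b d) t|} := by
  intro t ht
  refine ⟨hd.le.trans ht.1.le, ?_⟩
  rcases le_or_gt t b with htb | hbt
  · rw [lamStar_gsp_of_mem_Ioc_left hm hd hb1 ⟨ht.1, htb⟩, abs_neg, abs_one]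
  · rw [lamStar_gsp_of_mem_Ioc_right hm (hd.trans_le hdb) hdb ⟨hbt, ht.2⟩, abs_one]

end LamStarGsp

section NormGsp

variable {m : ℕ} {b d t T : ℝ}

theorem DcoefStar_pos_iff : 0 < DcoefStar m b ↔ 0 < 2 * b ^ (1 + m / 2 : ℝ) - 1 :=
  mul_pos_iff_of_pos_left (by positivity)

theorem t0Star_pos (hm : 0 < m) (hD : 0 < DcoefStar m b) : 0 < t0Star m b := by
  have hm' : (0 : ℝ) < m := Nat.cast_pos.mpr hm
  have := DcoefStar_pos_iff.mp hD
  unfold t0Star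
  positivity

theorem DcoefStar_mul_t0Star_rpow (hm : 0 < m) (hD : 0 < DcoefStar m b) :
    DcoefStar m b * t0Star m b ^ (-1 - m / 2 : ℝ) = m / (2 + m) := by
  have hm' : (0 : ℝ) < m := Nat.cast_pos.mpr hm
  have hP := DcoefStar_pos_iff.mp hD
  have hT : t0Star m b = (2 * (1 + m) / m * (2 * b ^ (1 + m / 2 : ℝ) - 1)) ^ (2 / (2 + m) : ℝ) :=
    (mul_rpow (by positivity) hP.le).symm
  rw [hT, ← rpow_mul (by positivity),
    show (2 / (2 + m) * (-1 - m / 2) : ℝ) = -1 by field_simp; ring, rpow_neg_one, DcoefStar]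
  generalize 2 * b ^ (1 + m / 2 : ℝ) - 1 = X at hP ⊢
  field_simp

theorem lt_of_DcoefStar_mul_rpow_lt {x y : ℝ} (hm : 0 < m) (hD : 0 < DcoefStar m b)
    (hx : 0 < x) (hy : 0 < y)
    (h : DcoefStar m b * x ^ (-1 - m / 2 : ℝ) < DcoefStar m b * y ^ (-1 - m / 2 : ℝ)) : y < x := by
  have hm' : (0 : ℝ) < m := Nat.cast_pos.mpr hm
  exact (rpow_lt_rpow_iff_of_neg hx hy (by linarith)).mp (lt_of_mul_lt_mul_left h hD.le)

theorem t0Star_mem_Ioo (hm : 0 < m) (hd : 0 < d) (hdb : d < b) (hD : 0 < DcoefStar m b)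
    (hgd : 0 < -(m : ℝ) / (2 + m) + DcoefStar m b * d ^ (-1 - m / 2 : ℝ))
    (hgb : -(m : ℝ) / (2 + m) + DcoefStar m b * b ^ (-1 - m / 2 : ℝ) < 0) :
    t0Star m b ∈ Ioo d b := by
  have hT := DcoefStar_mul_t0Star_rpow hm hD
  have hT0 := t0Star_pos hm hD
  rw [neg_div] at hgd hgb
  exact ⟨lt_of_DcoefStar_mul_rpow_lt hm hD hT0 hd (by linarith),
    lt_of_DcoefStar_mul_rpow_lt hm hD (hd.trans hdb) hT0 (by linarith)⟩

theorem eqOn_abs_gsp_left (hm : 0 < m) (hd : 0 < d) (hTb : T ≤ b) (hD : 0 < DcoefStar m b)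
    (hT : DcoefStar m b * T ^ (-1 - m / 2 : ℝ) = m / (2 + m)) :
    EqOn (fun t => |gsp m b d t|)
      (fun t => -(m / (2 + m) : ℝ) + DcoefStar m b * t ^ (-1 - m / 2 : ℝ)) (Ioo d T) := by
  intro t ht
  have hm' : (0 : ℝ) < m := Nat.cast_pos.mpr hm
  have hpow : T ^ (-1 - m / 2 : ℝ) ≤ t ^ (-1 - m / 2 : ℝ) :=
    rpow_le_rpow_of_nonpos (hd.trans ht.1) ht.2.le (by linarith)
  have := mul_le_mul_of_nonneg_left hpow hD.le
  dsimp only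
  rw [gsp_of_mem_Ioc_left ⟨ht.1, ht.2.le.trans hTb⟩, abs_of_nonneg (by linarith)]

theorem eqOn_abs_gsp_mid (hm : 0 < m) (hT0 : 0 < T) (hdT : d ≤ T) (hD : 0 < DcoefStar m b)
    (hT : DcoefStar m b * T ^ (-1 - m / 2 : ℝ) = m / (2 + m)) :
    EqOn (fun t => |gsp m b d t|)
      (fun t => (m / (2 + m) : ℝ) + -DcoefStar m b * t ^ (-1 - m / 2 : ℝ)) (Ioo T b) := by
  intro t ht
  have hm' : (0 : ℝ) < m := Nat.cast_pos.mpr hm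
  have hpow : t ^ (-1 - m / 2 : ℝ) ≤ T ^ (-1 - m / 2 : ℝ) :=
    rpow_le_rpow_of_nonpos hT0 ht.1.le (by linarith)
  have := mul_le_mul_of_nonneg_left hpow hD.le
  dsimp only
  rw [gsp_of_mem_Ioc_left ⟨hdT.trans_lt ht.1, ht.2.le⟩, abs_of_nonpos (by linarith)]
  ring

theorem gsp_le_neg_one_of_mem_Ioc_right (hb : 0 < b) (ht : t ∈ Ioc b 1) :
    gsp m b d t ≤ -1 := by
  have hpow : 1 ≤ t ^ (-1 - m / 2 : ℝ) :=
    one_le_rpow_of_pos_of_le_one_of_nonpos (hb.trans ht.1) ht.2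
      (by linarith [Nat.cast_nonneg (α := ℝ) m])
  have hK : (2 * (1 + m) / (2 + m) : ℝ) = m / (2 + m) + 1 := by field_simp; ring
  have := mul_le_mul_of_nonneg_left hpow (by positivity : (0 : ℝ) ≤ 2 * (1 + m) / (2 + m))
  rw [gsp_of_mem_Ioc_right ht]
  linarith

theorem eqOn_abs_gsp_right (hb : 0 < b) :
    EqOn (fun t => |gsp m b d t|)
      (fun t => -(m / (2 + m) : ℝ) + (2 * (1 + m) / (2 + m) : ℝ) * t ^ (-1 - m / 2 : ℝ))
      (Ioo b 1) := by
  intro t ht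
  have hneg := gsp_le_neg_one_of_mem_Ioc_right (d := d) (m := m) hb ⟨ht.1, ht.2.le⟩
  dsimp only
  rw [abs_of_nonpos (by linarith), gsp_of_mem_Ioc_right ⟨ht.1, ht.2.le⟩]
  ring

section Pieces

variable (hm : 0 < m) (hd : 0 < d) (hdT : d < T) (hTb : T < b) (hb1 : b < 1)
  (hD : 0 < DcoefStar m b) (hT : DcoefStar m b * T ^ (-1 - m / 2 : ℝ) = m / (2 + m))
include hm hd hdT hTb hb1 hD hT

theorem integral_Ici_abs_gsp_eq_add :
    ∫ t in Ici (0 : ℝ), |gsp m b d t| =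
      (∫ t in d..T, |gsp m b d t|) + (∫ t in T..b, |gsp m b d t|) + ∫ t in b..1, |gsp m b d t| := by
  have hT0 := hd.trans hdT
  have h₁ := intervalIntegrable_of_eqOn_const_add_mul_rpow hd hdT.le
    (eqOn_abs_gsp_left hm hd hTb.le hD hT)
  have h₂ := intervalIntegrable_of_eqOn_const_add_mul_rpow hT0 hTb.le
    (eqOn_abs_gsp_mid hm hT0 hdT.le hD hT)
  have h₃ := intervalIntegrable_of_eqOn_const_add_mul_rpow (hT0.trans hTb) hb1.le
    (eqOn_abs_gsp_right (d := d) (m := m) (hT0.trans hTb))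
  have hsupp (t : ℝ) (ht : t ∉ Ioc d 1) : |gsp m b d t| = 0 := by
    rw [gsp_eq_zero_of_notMem (hdT.trans hTb).le hb1.le ht, abs_zero]
  rw [intervalIntegral.integral_add_adjacent_intervals h₁ h₂,
    intervalIntegral.integral_add_adjacent_intervals (h₁.trans h₂) h₃,
    setIntegral_eq_integral_of_forall_compl_eq_zero fun t ht =>
      hsupp t fun h => ht (mem_Ici.mpr (hd.le.trans h.1.le)),
    intervalIntegral.integral_eq_integral_of_support_subset fun t ht => by
      by_contra hn; exact ht (hsupp t hn)]

theorem integral_Ici_abs_gsp_pos : 0 < ∫ t in Ici (0 : ℝ), |gsp m b d t| := by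
  have hb := hd.trans (hdT.trans hTb)
  have h₁ : 0 ≤ ∫ t in d..T, |gsp m b d t| :=
    intervalIntegral.integral_nonneg hdT.le fun _ _ => abs_nonneg _
  have h₂ : 0 ≤ ∫ t in T..b, |gsp m b d t| :=
    intervalIntegral.integral_nonneg hTb.le fun _ _ => abs_nonneg _
  have h₃ : 0 < ∫ t in b..1, |gsp m b d t| :=
    intervalIntegral.intervalIntegral_pos_of_pos_on
      (intervalIntegrable_of_eqOn_const_add_mul_rpow hb hb1.le (eqOn_abs_gsp_right hb))
      (fun t ht => by
        have := gsp_le_neg_one_of_mem_Ioc_right (d := d) (m := m) hb ⟨ht.1, ht.2.le⟩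
        rw [abs_of_neg (by linarith)]; linarith)
      hb1
  rw [integral_Ici_abs_gsp_eq_add hm hd hdT hTb hb1 hD hT]
  linarith

end Pieces

theorem integral_Ici_abs_gsp_eq_denomStar (hm : 0 < m) (hd : 0 < d)
    (hdT : d < t0Star m b) (hTb : t0Star m b < b) (hb1 : b < 1) (hD : 0 < DcoefStar m b) :
    ∫ t in Ici (0 : ℝ), |gsp m b d t| = denomStar m b d := by
  have hm' : (0 : ℝ) < m := Nat.cast_pos.mpr hm
  have hT := DcoefStar_mul_t0Star_rpow hm hD
  have hT0 := hd.trans hdT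
  have hb := hT0.trans hTb
  have hr := neg_one_sub_half_ne_neg_one hm
  rw [integral_Ici_abs_gsp_eq_add hm hd hdT hTb hb1 hD hT,
    integral_eq_rpowPrimitive_sub hd hdT.le hr (eqOn_abs_gsp_left hm hd hTb.le hD hT),
    integral_eq_rpowPrimitive_sub hT0 hTb.le hr (eqOn_abs_gsp_mid hm hT0 hdT.le hD hT),
    integral_eq_rpowPrimitive_sub hb hb1.le hr (eqOn_abs_gsp_right hb)]
  have hTw : t0Star m b ^ (-(m / 2) : ℝ) = m / (2 + m) / DcoefStar m b * t0Star m b := by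
    rw [← hT, mul_div_cancel_left₀ _ hD.ne', ← rpow_add_one hT0.ne']; ring_nf
  have hbw : b ^ (-(m / 2) : ℝ) = b / b ^ (1 + m / 2 : ℝ) := by
    rw [eq_div_iff (rpow_pos_of_pos hb _).ne', ← rpow_add hb]; ring_nf; exact rpow_one b
  have hP := rpow_pos_of_pos hb (1 + m / 2 : ℝ)
  have hP' := DcoefStar_pos_iff.mp hD
  simp only [rpowPrimitive, one_rpow, show (-1 - m / 2 : ℝ) + 1 = -(m / 2) by ring]
  rw [hTw, hbw, denomStar, neg_div (2 : ℝ), DcoefStar]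
  generalize t0Star m b = T
  generalize b ^ (1 + m / 2 : ℝ) = P at hP hP' ⊢
  field_simp
  ring

end NormGsp

/-- For `(b⋆,d⋆) ∈ S*_m` the denominator of `W_*(b⋆,d⋆,m)` is positive and equals the
`L¹`-norm of `g_{b⋆,d⋆,m}`, the measure of `{|Λ_m^* g_{b⋆,d⋆,m}| ≥ 1}` is at least `1 - d⋆`,
and consequently it is at least `W_*(b⋆,d⋆,m)` times the `L¹`-norm of `g_{b⋆,d⋆,m}`. -/
theorem stmt_5 (m : ℕ) (hm : 1 ≤ m) (b d : ℝ) (h : (b, d) ∈ SsetStar m) :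
    0 < denomStar m b d ∧
    denomStar m b d = ∫ t in Set.Ici (0 : ℝ), |gsp m b d t| ∧
    ENNReal.ofReal (1 - d) ≤
      MeasureTheory.volume {t : ℝ | 0 ≤ t ∧ 1 ≤ |LamStar m (gsp m b d) t|} ∧
    ENNReal.ofReal (WfStar m b d * ∫ t in Set.Ici (0 : ℝ), |gsp m b d t|) ≤
      MeasureTheory.volume {t : ℝ | 0 ≤ t ∧ 1 ≤ |LamStar m (gsp m b d) t|} := by
  obtain ⟨hd, hdb, hb1, hD, -, hgd, hgb⟩ := h
  obtain ⟨hdT, hTb⟩ := t0Star_mem_Ioo hm hd hdb hD hgd hgb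
  have hL1 := integral_Ici_abs_gsp_eq_denomStar hm hd hdT hTb hb1 hD
  have hpos : 0 < denomStar m b d :=
    hL1 ▸ integral_Ici_abs_gsp_pos hm hd hdT hTb hb1 hD (DcoefStar_mul_t0Star_rpow hm hD)
  have hvol : ENNReal.ofReal (1 - d) ≤ volume {t : ℝ | 0 ≤ t ∧ 1 ≤ |LamStar m (gsp m b d) t|} :=
    Real.volume_Ioc ▸ measure_mono (Ioc_subset_superlevel_abs_lamStar_gsp hm hd hdb.le hb1.le)
  refine ⟨hpos, hL1.symm, hvol, ?_⟩
  rwa [hL1, WfStar, div_mul_cancel₀ _ hpos.ne']
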